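/- Let G be a real m×n matrix and Z a real m×k matrix with GᵀZ = 0, and let D be the m×m diagonal matrix with diagonal entries d₁,…,d_m satisfying 0 < κmin ≤ dᵢ ≤ κmax for all i; set η = κmax/κmin. For u ∈ ℝⁿ and w ∈ ℝᵏ, write s(u,w) = uᵀGᵀDGu + wᵀZᵀDZw and q(u,w) = s(u,w) + 2·uᵀGᵀDZw. Then for all u, w: (1/η)·s(u,w) ≤ q(u,w) ≤ (2 − 1/η)·s(u,w). (Here s is the quadratic form of the block-diagonal matrix A = blockdiag(GᵀDG, ZᵀDZ) and q is the quadratic form of the preconditioner M = HᵀDH with H = [G Z].) -/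

import Mathlib

/-!
Put `x = G u`, `y = Z w` and `D = diag d`. Then `s = xᵀDx + yᵀDy` and `q = (x + y)ᵀD(x + y)`,
while `2 s - q = (x - y)ᵀD(x - y)`. Since `GᵀZ = 0` the vectors `x` and `y` are orthogonal, so
`x + y` and `x - y` both have squared norm `T = |x|² + |y|²`. Hence `q` and `2 s - q` are at least
`κmin T`, whereas `s ≤ κmax T`; dividing gives both bounds.
-/

open Matrix

namespace Matrix

variable {ι ι' ι'' : Type*} [Fintype ι]

theorem dotProduct_transpose_mul_mulVec {R : Type*} [CommSemiring R] [Fintype ι'] [Fintype ι'']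
    (A : Matrix ι ι' R) (B : Matrix ι ι'' R) (u : ι' → R) (w : ι'' → R) :
    u ⬝ᵥ ((Aᵀ * B) *ᵥ w) = (A *ᵥ u) ⬝ᵥ (B *ᵥ w) := by
  rw [← mulVec_mulVec, dotProduct_mulVec, vecMul_transpose]

theorem dotProduct_transpose_mul_mul_mulVec {R : Type*} [CommSemiring R] [Fintype ι']
    [Fintype ι''] (A : Matrix ι ι' R) (P : Matrix ι ι R) (B : Matrix ι ι'' R)
    (u : ι' → R) (w : ι'' → R) :
    u ⬝ᵥ ((Aᵀ * P * B) *ᵥ w) = (A *ᵥ u) ⬝ᵥ (P *ᵥ (B *ᵥ w)) := by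
  rw [Matrix.mul_assoc, dotProduct_transpose_mul_mulVec, mulVec_mulVec]

theorem dotProduct_mulVec_comm_of_isSymm {R : Type*} [CommSemiring R] {P : Matrix ι ι R}
    (hP : P.IsSymm) (x y : ι → R) : y ⬝ᵥ (P *ᵥ x) = x ⬝ᵥ (P *ᵥ y) := by
  rw [dotProduct_mulVec, ← mulVec_transpose, hP.eq, dotProduct_comm]

section Ordered

variable {R : Type*} [CommRing R] [LinearOrder R] [IsStrictOrderedRing R]

theorem mul_dotProduct_self_le_dotProduct_diagonal_mulVec [DecidableEq ι] {d : ι → R} {κ : R}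
    (hd : ∀ i, κ ≤ d i) (v : ι → R) : κ * (v ⬝ᵥ v) ≤ v ⬝ᵥ (diagonal d *ᵥ v) := by
  simp only [dotProduct, mulVec_diagonal, Finset.mul_sum]
  refine Finset.sum_le_sum fun i _ ↦ ?_
  nlinarith [hd i, mul_self_nonneg (v i)]

theorem dotProduct_diagonal_mulVec_le_mul_dotProduct_self [DecidableEq ι] {d : ι → R} {κ : R}
    (hd : ∀ i, d i ≤ κ) (v : ι → R) : v ⬝ᵥ (diagonal d *ᵥ v) ≤ κ * (v ⬝ᵥ v) := by
  simp only [dotProduct, mulVec_diagonal, Finset.mul_sum]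
  refine Finset.sum_le_sum fun i _ ↦ ?_
  nlinarith [hd i, mul_self_nonneg (v i)]

end Ordered

theorem div_mul_le_add_two_mul_and_le_of_dotProduct_eq_zero {K : Type*} [Field K] [LinearOrder K]
    [IsStrictOrderedRing K] {P : Matrix ι ι K} (hP : P.IsSymm) {κmin κmax : K} (hκmin : 0 ≤ κmin)
    (hlo : ∀ v, κmin * (v ⬝ᵥ v) ≤ v ⬝ᵥ (P *ᵥ v))
    (hhi : ∀ v, v ⬝ᵥ (P *ᵥ v) ≤ κmax * (v ⬝ᵥ v))
    {x y : ι → K} (hxy : x ⬝ᵥ y = 0) :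
    κmin / κmax * (x ⬝ᵥ (P *ᵥ x) + y ⬝ᵥ (P *ᵥ y)) ≤
        x ⬝ᵥ (P *ᵥ x) + y ⬝ᵥ (P *ᵥ y) + 2 * (x ⬝ᵥ (P *ᵥ y)) ∧
      x ⬝ᵥ (P *ᵥ x) + y ⬝ᵥ (P *ᵥ y) + 2 * (x ⬝ᵥ (P *ᵥ y)) ≤
        (2 - κmin / κmax) * (x ⬝ᵥ (P *ᵥ x) + y ⬝ᵥ (P *ᵥ y)) := by
  set s := x ⬝ᵥ (P *ᵥ x) + y ⬝ᵥ (P *ᵥ y)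
  set T := x ⬝ᵥ x + y ⬝ᵥ y
  have hyx : y ⬝ᵥ x = 0 := by rw [dotProduct_comm, hxy]
  have hPyx := dotProduct_mulVec_comm_of_isSymm hP x y
  have hT_add : (x + y) ⬝ᵥ (x + y) = T := by
    simp only [add_dotProduct, dotProduct_add, hxy, hyx, T]; ring
  have hT_sub : (x - y) ⬝ᵥ (x - y) = T := by
    simp only [sub_dotProduct, dotProduct_sub, hxy, hyx, T]; ring
  have hq_add : (x + y) ⬝ᵥ (P *ᵥ (x + y)) = s + 2 * (x ⬝ᵥ (P *ᵥ y)) := by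
    simp only [mulVec_add, add_dotProduct, dotProduct_add, hPyx, s]; ring
  have hq_sub : (x - y) ⬝ᵥ (P *ᵥ (x - y)) = 2 * s - (s + 2 * (x ⬝ᵥ (P *ᵥ y))) := by
    simp only [mulVec_sub, sub_dotProduct, dotProduct_sub, hPyx, s]; ring
  have hT_nonneg : 0 ≤ T := by
    rw [← hT_add]
    exact Finset.sum_nonneg fun i _ ↦ mul_self_nonneg _
  have hs_le : s ≤ κmax * T := by linarith [hhi x, hhi y]
  have hs_nonneg : 0 ≤ s := by nlinarith [hlo x, hlo y]
  have hratio : κmin / κmax * s ≤ κmin * T := by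
    rcases le_or_gt κmax 0 with hκmax | hκmax
    · nlinarith [div_nonpos_of_nonneg_of_nonpos hκmin hκmax]
    · calc κmin / κmax * s ≤ κmin / κmax * (κmax * T) := by gcongr
        _ = κmin * T := by field_simp
  have h_add := hlo (x + y)
  have h_sub := hlo (x - y)
  rw [hT_add, hq_add] at h_add
  rw [hT_sub, hq_sub] at h_sub
  constructor <;> linarith

end Matrix

/-- With `GᵀZ = 0` and `D = diag(d)`, `0 < κmin ≤ dᵢ ≤ κmax`, `η = κmax/κmin`,
writing `s(u,w) = uᵀGᵀDGu + wᵀZᵀDZw` and `q(u,w) = s(u,w) + 2·uᵀGᵀDZw`, we have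
`(1/η)·s(u,w) ≤ q(u,w) ≤ (2 - 1/η)·s(u,w)` for all `u, w`. -/
theorem spectral_equivalence {m n k : ℕ}
    (G : Matrix (Fin m) (Fin n) ℝ) (Z : Matrix (Fin m) (Fin k) ℝ)
    (hGZ : Gᵀ * Z = 0)
    (d : Fin m → ℝ) (κmin κmax : ℝ) (hκmin : 0 < κmin)
    (hd : ∀ i, κmin ≤ d i ∧ d i ≤ κmax)
    (s q : (Fin n → ℝ) → (Fin k → ℝ) → ℝ)
    (hs : ∀ u w, s u w = u ⬝ᵥ ((Gᵀ * Matrix.diagonal d * G) *ᵥ u) +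
        w ⬝ᵥ ((Zᵀ * Matrix.diagonal d * Z) *ᵥ w))
    (hq : ∀ u w, q u w = s u w + 2 * (u ⬝ᵥ ((Gᵀ * Matrix.diagonal d * Z) *ᵥ w))) :
    ∀ (u : Fin n → ℝ) (w : Fin k → ℝ),
      (1 / (κmax / κmin)) * s u w ≤ q u w ∧
        q u w ≤ (2 - 1 / (κmax / κmin)) * s u w := by
  intro u w
  have horth : (G *ᵥ u) ⬝ᵥ (Z *ᵥ w) = 0 := by
    rw [← dotProduct_transpose_mul_mulVec, hGZ, zero_mulVec, dotProduct_zero]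
  rw [hq, hs, one_div_div, dotProduct_transpose_mul_mul_mulVec,
    dotProduct_transpose_mul_mul_mulVec, dotProduct_transpose_mul_mul_mulVec]
  exact div_mul_le_add_two_mul_and_le_of_dotProduct_eq_zero (isSymm_diagonal d) hκmin.le
    (mul_dotProduct_self_le_dotProduct_diagonal_mulVec fun i ↦ (hd i).1)
    (dotProduct_diagonal_mulVec_le_mul_dotProduct_self fun i ↦ (hd i).2) horth
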